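/- For every continuous function g : X → ℝ, the functional on C(X,ℝ) defined by f ↦ diam {∫ g dμ : μ ∈ M_max(f)} (the diameter of the set of integrals of g against maximising measures of f) is upper semi-continuous with respect to the supremum norm topology. -/

import Mathlib

open MeasureTheory

variable {X : Type*} [MetricSpace X] [CompactSpace X] [MeasurableSpace X] [BorelSpace X]

/-- The set of `T`-invariant Borel probability measures on `X`. -/
def invMeasures (T : X → X) : Set (ProbabilityMeasure X) :=
  {μ | MeasurePreserving T (μ : Measure X) (μ : Measure X)}

/-- `beta T f = sup_{μ ∈ M_T} ∫ f dμ`. -/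
noncomputable def beta (T : X → X) (f : X → ℝ) : ℝ :=
  sSup ((fun μ : ProbabilityMeasure X => ∫ x, f x ∂(μ : Measure X)) '' invMeasures T)

/-- The set of maximising measures of `f`. -/
def Mmax (T : X → X) (f : X → ℝ) : Set (ProbabilityMeasure X) :=
  {μ | μ ∈ invMeasures T ∧ ∫ x, f x ∂(μ : Measure X) = beta T f}

/-- The set of integrals of `g` against the maximising measures of `f`. -/
noncomputable def maxInts (T : X → X) (f g : X → ℝ) : Set ℝ :=
  (fun μ : ProbabilityMeasure X => ∫ x, g x ∂(μ : Measure X)) '' Mmax T f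

/-!
The correspondence `f ↦ M_max(f)` has a closed graph in `M(X) × C(X)`: `(f, μ) ↦ ∫ f dμ` is
jointly continuous, and `μ ∈ M_max(f)` iff `μ` is invariant and `∫ f dν ≤ ∫ f dμ` for every
invariant `ν`. As `M(X)` is compact, the set of `f` admitting `μ₁, μ₂ ∈ M_max(f)` with
`∫ g dμ₁ - ∫ g dμ₂ ≥ y` is the projection of a closed set along a compact factor, hence closed,
and outside it the diameter is `< y`.
-/

open Set Filter

lemma sSup_sub_sInf_lt_of_isCompact {s : Set ℝ} (hs : IsCompact s) {y : ℝ} (hy : 0 < y)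
    (h : ∀ a ∈ s, ∀ b ∈ s, a - b < y) : sSup s - sInf s < y := by
  rcases s.eq_empty_or_nonempty with rfl | hne
  · simpa using hy
  · exact h _ (hs.sSup_mem hne) _ (hs.sInf_mem hne)

theorem upperSemicontinuous_sSup_sub_sInf_image_fibre {P F : Type*} [TopologicalSpace P]
    [CompactSpace P] [TopologicalSpace F] {S : Set (P × F)} (hS : IsClosed S) {φ : P → ℝ}
    (hφ : Continuous φ) :
    UpperSemicontinuous fun f => sSup (φ '' {p | (p, f) ∈ S}) - sInf (φ '' {p | (p, f) ∈ S}) := by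
  intro f₀ y hy
  have hfibre : ∀ f, IsCompact (φ '' {p | (p, f) ∈ S}) := fun f =>
    (hS.preimage (Continuous.prodMk_left f)).isCompact.image hφ
  -- needed for empty fibres, whose diameter is `sSup ∅ - sInf ∅ = 0`
  have hy0 : 0 < y :=
    (sub_nonneg.2 (Real.sInf_le_sSup _ (hfibre f₀).bddBelow (hfibre f₀).bddAbove)).trans_lt hy
  let B : Set ((P × P) × F) :=
    {q | (q.1.1, q.2) ∈ S ∧ (q.1.2, q.2) ∈ S ∧ y ≤ φ q.1.1 - φ q.1.2}
  have hB : IsClosed B :=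
    (hS.preimage (f := fun q : (P × P) × F => (q.1.1, q.2)) (by fun_prop)).inter
      ((hS.preimage (f := fun q : (P × P) × F => (q.1.2, q.2)) (by fun_prop)).inter
        (isClosed_le (f := fun _ => y) (g := fun q : (P × P) × F => φ q.1.1 - φ q.1.2)
          continuous_const (by fun_prop)))
  have hf₀ : f₀ ∉ Prod.snd '' B := by
    rintro ⟨⟨⟨p, q⟩, f⟩, ⟨hp, hq, hpq⟩, rfl⟩
    have hp' := le_csSup (hfibre f).bddAbove (mem_image_of_mem φ hp)
    have hq' := csInf_le (hfibre f).bddBelow (mem_image_of_mem φ hq)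
    linarith
  filter_upwards [(isClosedMap_snd_of_compactSpace _ hB).isOpen_compl.mem_nhds hf₀] with f hf
  refine sSup_sub_sInf_lt_of_isCompact (hfibre f) hy0 ?_
  rintro _ ⟨p, hp, rfl⟩ _ ⟨q, hq, rfl⟩
  by_contra! hpq
  exact hf ⟨((p, q), f), ⟨hp, hq, hpq⟩, rfl⟩

section IntegralContinuousMap

variable {Ω : Type*} [TopologicalSpace Ω] [CompactSpace Ω] [MeasurableSpace Ω]

lemma abs_integral_continuousMap_le_norm (μ : ProbabilityMeasure Ω) (f : C(Ω, ℝ)) :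
    |∫ x, f x ∂(μ : Measure Ω)| ≤ ‖f‖ := by
  simpa using norm_integral_le_of_norm_le_const (μ := (μ : Measure Ω))
    (Eventually.of_forall fun x => f.norm_coe_le_norm x)

variable [OpensMeasurableSpace Ω]

lemma lipschitzWith_integral_continuousMap (μ : ProbabilityMeasure Ω) :
    LipschitzWith 1 fun f : C(Ω, ℝ) => ∫ x, f x ∂(μ : Measure Ω) := by
  refine LipschitzWith.of_dist_le_mul fun f f' => ?_
  have hf : Integrable f (μ : Measure Ω) := (BoundedContinuousFunction.mkOfCompact f).integrable _
  have hf' : Integrable f' (μ : Measure Ω) :=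
    (BoundedContinuousFunction.mkOfCompact f').integrable _
  rw [Real.dist_eq, ← integral_sub hf hf', dist_eq_norm, NNReal.coe_one, one_mul]
  exact abs_integral_continuousMap_le_norm μ (f - f')

lemma continuous_integral_continuousMap_prod :
    Continuous fun p : C(Ω, ℝ) × ProbabilityMeasure Ω => ∫ x, p.1 x ∂(p.2 : Measure Ω) :=
  continuous_prod_of_continuous_lipschitzWith _ 1
    ProbabilityMeasure.continuous_integral_continuousMap lipschitzWith_integral_continuousMap

end IntegralContinuousMap

omit [CompactSpace X] in
lemma isClosed_invMeasures {T : X → X} (hT : Continuous T) : IsClosed (invMeasures T) := by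
  have : invMeasures T = {μ | μ.map hT.measurable.aemeasurable = μ} := by
    ext μ
    rw [mem_ofPred_eq, ← ProbabilityMeasure.toMeasure_injective.eq_iff,
      ProbabilityMeasure.toMeasure_map]
    exact ⟨MeasurePreserving.map_eq, fun h => ⟨hT.measurable, h⟩⟩
  rw [this]
  exact isClosed_eq (ProbabilityMeasure.continuous_map hT) continuous_id

omit [BorelSpace X] in
lemma mem_Mmax_iff (T : X → X) (f : C(X, ℝ)) (μ : ProbabilityMeasure X) :
    μ ∈ Mmax T f ↔ μ ∈ invMeasures T ∧
      ∀ ν ∈ invMeasures T, ∫ x, f x ∂(ν : Measure X) ≤ ∫ x, f x ∂(μ : Measure X) := by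
  let I : ProbabilityMeasure X → ℝ := fun ν => ∫ x, f x ∂(ν : Measure X)
  have hbdd : BddAbove (I '' invMeasures T) := by
    refine ⟨‖f‖, ?_⟩
    rintro _ ⟨ν, -, rfl⟩
    exact le_of_abs_le (abs_integral_continuousMap_le_norm ν f)
  change μ ∈ invMeasures T ∧ I μ = sSup (I '' invMeasures T) ↔
    μ ∈ invMeasures T ∧ ∀ ν ∈ invMeasures T, I ν ≤ I μ
  refine and_congr_right fun hμ => ⟨fun h ν hν => h ▸ le_csSup hbdd (mem_image_of_mem I hν),
    fun h => (IsGreatest.csSup_eq ⟨mem_image_of_mem I hμ, ?_⟩).symm⟩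
  rintro _ ⟨ν, hν, rfl⟩
  exact h ν hν

lemma isClosed_setOf_mem_Mmax {T : X → X} (hT : Continuous T) :
    IsClosed {p : ProbabilityMeasure X × C(X, ℝ) | p.1 ∈ Mmax T p.2} := by
  simp_rw [mem_Mmax_iff, ofPred_and, ofPred_forall]
  refine ((isClosed_invMeasures hT).preimage continuous_fst).inter
    (isClosed_iInter fun ν => isClosed_iInter fun _ => isClosed_le ?_ ?_)
  · exact continuous_integral_continuousMap_prod.comp (continuous_snd.prodMk continuous_const)
  · exact continuous_integral_continuousMap_prod.comp continuous_swap

theorem stmt15_general (T : X → X) (hT : Continuous T) (g : C(X, ℝ)) :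
    UpperSemicontinuous (fun f : C(X, ℝ) =>
      sSup (maxInts T ⇑f ⇑g) - sInf (maxInts T ⇑f ⇑g)) :=
  upperSemicontinuous_sSup_sub_sInf_image_fibre (isClosed_setOf_mem_Mmax hT)
    (ProbabilityMeasure.continuous_integral_continuousMap g)

theorem stmt15 [Nonempty X] (T : X → X) (hT : Continuous T) (g : C(X, ℝ)) :
    UpperSemicontinuous (fun f : C(X, ℝ) =>
      sSup (maxInts T ⇑f ⇑g) - sInf (maxInts T ⇑f ⇑g)) :=
  stmt15_general T hT g
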